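/- Let k ≥ 1 be odd. For every continuous function u : ℝ² → ℝ there exists a unique bivariate real polynomial v of total degree at most k that matches the Crouzeix–Raviart moments of u of order k. -/

import Mathlib

open MeasureTheory

/-- The reference triangle `T ⊂ ℝ²`, the convex hull of `(0,0)`, `(1,0)`, `(0,1)`. -/
noncomputable def refTriangle : Set (Fin 2 → ℝ) :=
  convexHull ℝ {![0, 0], ![1, 0], ![0, 1]}

/-- Parametrization of the first edge of the reference triangle: `γ₁(t) = (t, 0)`. -/
def edgeParam₁ (t : ℝ) : Fin 2 → ℝ := ![t, 0]

/-- Parametrization of the second edge of the reference triangle: `γ₂(t) = (0, t)`. -/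
def edgeParam₂ (t : ℝ) : Fin 2 → ℝ := ![0, t]

/-- Parametrization of the third edge of the reference triangle: `γ₃(t) = (t, 1 − t)`. -/
def edgeParam₃ (t : ℝ) : Fin 2 → ℝ := ![t, 1 - t]

/-- `v` matches the Crouzeix–Raviart moments of `u` of order `k`: all edge moments
of order `≤ k − 1` on the three edges of the reference triangle and all interior
moments of order `≤ k − 3` agree. -/
def MatchesCRMoments (k : ℕ) (u v : (Fin 2 → ℝ) → ℝ) : Prop :=
  (∀ i < k, ∀ γ ∈ ({edgeParam₁, edgeParam₂, edgeParam₃} : Set (ℝ → Fin 2 → ℝ)),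
      ∫ t in (0 : ℝ)..1, t ^ i * v (γ t) = ∫ t in (0 : ℝ)..1, t ^ i * u (γ t)) ∧
  (∀ a b : ℕ, a + b + 3 ≤ k →
      ∫ x in refTriangle, (x 0) ^ a * (x 1) ^ b * v x
        = ∫ x in refTriangle, (x 0) ^ a * (x 1) ^ b * u x)

/-!
The moment map `v ↦ (edge and interior moments of v)` is linear from the polynomials of total
degree `≤ k`, a space of dimension `(k + 1)(k + 2)/2`, to a space of the same dimension
`3k + (k - 2)(k - 1)/2`, so it suffices to show that it is injective.

Let `v` have vanishing moments. On each edge `v` restricts to a polynomial `q` of degree `≤ k`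
orthogonal to all polynomials of degree `< k` on `[0, 1]`; as `k` is odd, `q + q(1 - ·)` is then
orthogonal to all polynomials of degree `≤ k` (`t ^ k + (1 - t) ^ k` has degree `< k`), hence
`q(1 - t) = -q(t)` and `q(0) = -q(1)`. Going around the three vertices this forces `v` to vanish
at the vertices, and then `q = t (t - 1) r` with `∫ q r = 0` forces `q = 0`. So `v` vanishes on the
boundary, `v = b w` with the cubic bubble `b = x y (1 - x - y)` and `deg w ≤ k - 3`, and the
interior moments give `∫_T b w² = 0`, whence `w = 0`.
-/

open Set

theorem MeasureTheory.eqOn_zero_of_setIntegral_eq_zero {α : Type*} [TopologicalSpace α]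
    [MeasurableSpace α] {μ : Measure α} [μ.IsOpenPosMeasure] {f : α → ℝ} {s U : Set α}
    (hs : MeasurableSet s) (hf : IntegrableOn f s μ) (hnn : ∀ x ∈ s, 0 ≤ f x)
    (h : ∫ x in s, f x ∂μ = 0) (hU : IsOpen U) (hUs : U ⊆ s) (hfU : ContinuousOn f U) :
    EqOn f 0 U := by
  have hae : f =ᵐ[μ.restrict s] 0 :=
    (integral_eq_zero_iff_of_nonneg_ae ((ae_restrict_iff' hs).mpr (ae_of_all _ hnn)) hf).mp h
  exact Measure.eqOn_open_of_ae_eq (ae_restrict_of_ae_restrict_of_subset hUs hae) hU hfU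
    continuousOn_const

section OneVariable

open Polynomial

theorem Polynomial.eq_zero_of_integral_eval_eq_zero {q : ℝ[X]}
    (hnn : ∀ t ∈ Icc (0 : ℝ) 1, 0 ≤ q.eval t) (h : ∫ t in (0 : ℝ)..1, q.eval t = 0) : q = 0 := by
  rw [intervalIntegral.integral_of_le zero_le_one] at h
  have hzero := eqOn_zero_of_setIntegral_eq_zero measurableSet_Ioc q.continuous.integrableOn_Ioc
    (fun t ht => hnn t (Ioc_subset_Icc_self ht)) h isOpen_Ioo Ioo_subset_Ioc_self
    q.continuous.continuousOn
  exact eq_zero_of_infinite_isRoot q ((Ioo_infinite zero_lt_one).mono fun t ht => hzero ht)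

@[simp]
theorem Polynomial.natDegree_one_sub_X {R : Type*} [Ring R] [Nontrivial R] :
    (1 - X : R[X]).natDegree = 1 := by
  rw [← neg_sub, natDegree_neg, ← C_1, natDegree_X_sub_C]

theorem Polynomial.natDegree_X_pow_add_one_sub_X_pow_lt {k : ℕ} (hodd : Odd k) :
    ((X : ℝ[X]) ^ k + (1 - X) ^ k).natDegree < k := by
  have hmon : ((X - C 1 : ℝ[X]) ^ k).coeff k = 1 := by
    have h := ((monic_X_sub_C (1 : ℝ)).pow k).coeff_natDegree
    rwa [natDegree_pow, natDegree_X_sub_C, mul_one] at h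
  have hcoeff : ((X : ℝ[X]) ^ k + (1 - X) ^ k).coeff k = 0 := by
    rw [← neg_sub, hodd.neg_pow, coeff_add, coeff_neg, ← C_1, hmon, coeff_X_pow_self,
      add_neg_cancel]
  have hle : ((X : ℝ[X]) ^ k + (1 - X) ^ k).natDegree ≤ k :=
    natDegree_add_le_of_degree_le (by simp) (by simp)
  have := natDegree_le_pred hle hcoeff
  have := hodd.pos
  omega

def HasVanishingMoments (k : ℕ) (p : ℝ[X]) : Prop :=
  ∀ i < k, ∫ t in (0 : ℝ)..1, t ^ i * p.eval t = 0

namespace HasVanishingMoments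

variable {k : ℕ} {p : ℝ[X]}

theorem integral_eval_mul_eq_zero (hp : HasVanishingMoments k p) {q : ℝ[X]}
    (hq : q.natDegree < k) : ∫ t in (0 : ℝ)..1, q.eval t * p.eval t = 0 := by
  simp_rw [eval_eq_sum_range' hq, Finset.sum_mul, mul_assoc]
  rw [intervalIntegral.integral_finsetSum fun i _ => by
    exact (by fun_prop : Continuous _).intervalIntegrable _ _]
  exact Finset.sum_eq_zero fun i hi => by
    rw [intervalIntegral.integral_const_mul, hp i (Finset.mem_range.mp hi), mul_zero]

theorem eq_zero (hp : HasVanishingMoments k p) (hdeg : p.natDegree < k) : p = 0 :=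
  mul_self_eq_zero.mp <| eq_zero_of_integral_eval_eq_zero
    (fun t _ => by simpa only [eval_mul] using mul_self_nonneg (p.eval t))
    (by simpa only [eval_mul] using hp.integral_eval_mul_eq_zero hdeg)

theorem comp_one_sub_X (hp : HasVanishingMoments k p) :
    HasVanishingMoments k (p.comp (1 - X)) := by
  intro i hi
  set f : ℝ → ℝ := fun s => ((1 - X : ℝ[X]) ^ i).eval s * p.eval s
  calc ∫ t in (0 : ℝ)..1, t ^ i * (p.comp (1 - X)).eval t
      = ∫ t in (0 : ℝ)..1, f (1 - t) := by simp [f]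
    _ = ∫ t in (0 : ℝ)..1, f t := by simp
    _ = 0 := hp.integral_eval_mul_eq_zero (by simpa using hi)

theorem add {q : ℝ[X]} (hp : HasVanishingMoments k p) (hq : HasVanishingMoments k q) :
    HasVanishingMoments k (p + q) := by
  intro i hi
  simp only [eval_add, mul_add]
  rw [intervalIntegral.integral_add, hp i hi, hq i hi, add_zero] <;>
    exact (by fun_prop : Continuous _).intervalIntegrable _ _

theorem comp_one_sub_X_eq_neg (hp : HasVanishingMoments k p) (hodd : Odd k)
    (hdeg : p.natDegree ≤ k) : p.comp (1 - X) = -p := by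
  set r := p + p.comp (1 - X)
  have hr : HasVanishingMoments k r := hp.add hp.comp_one_sub_X
  have hsymm : ∀ t, r.eval (1 - t) = r.eval t := fun t => by
    simp only [r, eval_add, eval_comp, eval_sub, eval_one, eval_X, sub_sub_cancel]
    ring
  have hflip : ∫ t in (0 : ℝ)..1, t ^ k * r.eval t
      = ∫ t in (0 : ℝ)..1, (1 - t) ^ k * r.eval t := by
    simpa [hsymm] using
      intervalIntegral.integral_comp_sub_left (fun s => (1 - s) ^ k * r.eval s) (a := 0) (b := 1) 1
  have htop : ∫ t in (0 : ℝ)..1, t ^ k * r.eval t = 0 := by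
    have h := hr.integral_eval_mul_eq_zero (natDegree_X_pow_add_one_sub_X_pow_lt hodd)
    simp only [eval_add, eval_pow, eval_X, eval_sub, eval_one, add_mul] at h
    rw [intervalIntegral.integral_add, ← hflip] at h
    · linarith
    all_goals exact (by fun_prop : Continuous _).intervalIntegrable _ _
  have hr' : HasVanishingMoments (k + 1) r := fun i hi => by
    rcases Nat.lt_succ_iff_lt_or_eq.mp hi with hi | rfl
    · exact hr i hi
    · exact htop
  have hrdeg : r.natDegree < k + 1 := by
    refine Nat.lt_succ_of_le (natDegree_add_le_of_degree_le hdeg ?_)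
    exact natDegree_comp_le.trans (by simpa using hdeg)
  exact eq_neg_of_add_eq_zero_right (hr'.eq_zero hrdeg)

theorem eq_zero_of_eval_zero_of_eval_one (hp : HasVanishingMoments k p)
    (hdeg : p.natDegree ≤ k) (h0 : p.eval 0 = 0) (h1 : p.eval 1 = 0) : p = 0 := by
  set b : ℝ[X] := (X - C 0) * (X - C 1)
  have hb : b ≠ 0 := mul_ne_zero (X_sub_C_ne_zero 0) (X_sub_C_ne_zero 1)
  obtain ⟨q, rfl⟩ : b ∣ p := (isCoprime_X_sub_C_of_isUnit_sub (by norm_num)).mul_dvd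
    (dvd_iff_isRoot.mpr h0) (dvd_iff_isRoot.mpr h1)
  rcases eq_or_ne q 0 with rfl | hq
  · exact mul_zero b
  have hqdeg : q.natDegree < k := by
    rw [natDegree_mul hb hq, natDegree_mul (X_sub_C_ne_zero 0) (X_sub_C_ne_zero 1),
      natDegree_X_sub_C, natDegree_X_sub_C] at hdeg
    omega
  have hbq : -(q * (b * q)) = 0 := by
    refine eq_zero_of_integral_eval_eq_zero (fun t ht => ?_) ?_
    · have : 0 ≤ t * (1 - t) * q.eval t ^ 2 := by
        have := ht.1; have := ht.2; positivity
      simp only [b, eval_neg, eval_mul, eval_sub, eval_X, eval_C]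
      nlinarith
    · simpa only [eval_neg, eval_mul, intervalIntegral.integral_neg, neg_eq_zero] using
        hp.integral_eval_mul_eq_zero hqdeg
  exact absurd (neg_eq_zero.mp hbq) (mul_ne_zero hq (mul_ne_zero hb hq))

end HasVanishingMoments

end OneVariable

open scoped Polynomial

namespace MvPolynomial

variable {σ R : Type*}

theorem eval_aeval [CommSemiring R] (g : σ → MvPolynomial σ R) (z : σ → R)
    (p : MvPolynomial σ R) : eval z (aeval g p) = eval (fun i => eval z (g i)) p := by
  induction p using MvPolynomial.induction_on <;> simp_all

theorem polynomial_eval_aeval [CommSemiring R] (g : σ → R[X]) (t : R) (p : MvPolynomial σ R) :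
    (aeval g p).eval t = eval (fun i => (g i).eval t) p := by
  induction p using MvPolynomial.induction_on <;> simp_all

theorem natDegree_aeval_le_totalDegree [CommSemiring R] {g : σ → R[X]}
    (hg : ∀ i, (g i).natDegree ≤ 1) (p : MvPolynomial σ R) :
    (aeval g p).natDegree ≤ p.totalDegree := by
  conv_lhs => rw [p.as_sum, map_sum]
  refine Polynomial.natDegree_sum_le_of_forall_le _ _ fun d hd => ?_
  rw [aeval_monomial, Polynomial.algebraMap_apply, Algebra.algebraMap_self, RingHom.id_apply]
  refine Polynomial.natDegree_C_mul_le _ _ |>.trans <| Polynomial.natDegree_prod_le _ _ |>.trans <|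
    le_trans ?_ (le_totalDegree hd)
  exact Finset.sum_le_sum fun i _ => Polynomial.natDegree_pow_le.trans
    (by simpa using Nat.mul_le_mul_left (d i) (hg i))

theorem aeval_dvd_of_dvd_aeval [CommSemiring R] {g : σ → MvPolynomial σ R}
    (hg : ∀ i, aeval g (g i) = X i) {a p : MvPolynomial σ R} (h : a ∣ aeval g p) :
    aeval g a ∣ p := by
  have hinv : (aeval g).comp (aeval g) = AlgHom.id R _ := by
    rw [comp_aeval]; simp only [hg, aeval_X_left]
  have := map_dvd (aeval g) h
  rwa [← AlgHom.comp_apply (aeval g) (aeval g) p, hinv, AlgHom.id_apply] at this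

theorem X_zero_dvd_of_eval_cons_zero [CommRing R] [IsDomain R] {n : ℕ}
    {p : MvPolynomial (Fin (n + 1)) R} (s : Fin n → Set R) (hs : ∀ i, (s i).Infinite)
    (h : ∀ x ∈ Set.pi univ s, eval (Fin.cons 0 x) p = 0) : X 0 ∣ p := by
  have hcoeff : (finSuccEquiv R n p).coeff 0 = 0 := by
    refine funext_set s hs fun x hx => ?_
    rw [Polynomial.coeff_zero_eq_eval_zero, eval_polynomial_eval_finSuccEquiv, map_zero]
    exact h x hx
  have := map_dvd (finSuccEquiv R n).symm (Polynomial.X_dvd_iff.mpr hcoeff)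
  rwa [← finSuccEquiv_X_zero, AlgEquiv.symm_apply_apply, AlgEquiv.symm_apply_apply] at this

end MvPolynomial

open MvPolynomial

/-- The points `g (0, y)` lie on the zero set of `g 0` because `g` is an involution. -/
theorem dvd_of_eval_eq_zero_of_involutive {R : Type*} [CommRing R] [IsDomain R]
    {g : Fin 2 → MvPolynomial (Fin 2) R} (hg : ∀ i, aeval g (g i) = X i)
    {p : MvPolynomial (Fin 2) R} {S : Set R} (hS : S.Infinite)
    (h : ∀ y ∈ S, eval ![eval ![0, y] (g 0), eval ![0, y] (g 1)] p = 0) : g 0 ∣ p := by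
  have hdvd : X 0 ∣ aeval g p := X_zero_dvd_of_eval_cons_zero (fun _ => S) (fun _ => hS)
    fun x hx => by
      have hx0 : (Fin.cons 0 x : Fin 2 → R) = ![0, x 0] := by ext i; fin_cases i <;> rfl
      have hg01 : (fun i => eval ![0, x 0] (g i))
          = ![eval ![0, x 0] (g 0), eval ![0, x 0] (g 1)] := by
        ext i; fin_cases i <;> rfl
      rw [eval_aeval, hx0, hg01]
      exact h (x 0) (hx 0 trivial)
  simpa using aeval_dvd_of_dvd_aeval hg hdvd

noncomputable def bubble : MvPolynomial (Fin 2) ℝ := X 0 * X 1 * (1 - X 0 - X 1)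

theorem exists_eq_bubble_mul {v : MvPolynomial (Fin 2) ℝ} (h₁ : ∀ t, eval ![t, 0] v = 0)
    (h₂ : ∀ t, eval ![0, t] v = 0) (h₃ : ∀ t, eval ![t, 1 - t] v = 0) :
    ∃ w, v = bubble * w := by
  obtain ⟨a, rfl⟩ : X 0 ∣ v := dvd_of_eval_eq_zero_of_involutive (g := X) (by simp) infinite_univ
    fun y _ => by simpa using h₂ y
  let swap : Fin 2 → MvPolynomial (Fin 2) ℝ := ![X 1, X 0]
  have hswap (i : Fin 2) : aeval swap (swap i) = X i := by
    fin_cases i <;> simp [swap]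
  obtain ⟨b, rfl⟩ : X 1 ∣ a := dvd_of_eval_eq_zero_of_involutive hswap
    (finite_singleton 0).infinite_compl fun y hy => by simpa [swap, show y ≠ 0 from hy] using h₁ y
  let reflect : Fin 2 → MvPolynomial (Fin 2) ℝ := ![1 - X 0 - X 1, X 1]
  have hreflect (i : Fin 2) : aeval reflect (reflect i) = X i := by
    fin_cases i
    · simp only [reflect, Fin.zero_eta, Matrix.cons_val_zero, Matrix.cons_val_one, map_sub, map_one,
        aeval_X]
      ring
    · simp [reflect]
  obtain ⟨w, rfl⟩ : 1 - X 0 - X 1 ∣ b := dvd_of_eval_eq_zero_of_involutive hreflect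
    ((finite_singleton 1).insert 0).infinite_compl fun y hy => by
      obtain ⟨hy0, hy1⟩ : y ≠ 0 ∧ y ≠ 1 := by simpa [not_or] using hy
      simpa [reflect, hy0, sub_ne_zero.mpr hy1.symm] using h₃ (1 - y)
  exact ⟨w, by rw [bubble]; ring⟩

theorem refTriangle_eq : refTriangle = {x | 0 ≤ x 0 ∧ 0 ≤ x 1 ∧ x 0 + x 1 ≤ 1} := by
  apply Subset.antisymm
  · refine convexHull_min (by simp [insert_subset_iff]) ?_
    intro x ⟨hx0, hx1, hx⟩ y ⟨hy0, hy1, hy⟩ a b ha hb hab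
    simp only [mem_ofPred_eq, Pi.add_apply, Pi.smul_apply, smul_eq_mul]
    refine ⟨by positivity, by positivity, ?_⟩
    nlinarith [mul_le_mul_of_nonneg_left hx ha, mul_le_mul_of_nonneg_left hy hb]
  · rintro x ⟨hx0, hx1, hx⟩
    have hmem := (convex_convexHull ℝ ({![0, 0], ![1, 0], ![0, 1]} : Set (Fin 2 → ℝ))).sum_mem
      (t := Finset.univ) (w := ![1 - x 0 - x 1, x 0, x 1]) (z := ![![0, 0], ![1, 0], ![0, 1]])
      (by simp [Fin.forall_fin_succ, sub_sub, hx0, hx1, hx])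
      (by simp [Fin.sum_univ_three, add_assoc])
      (fun i _ => subset_convexHull ℝ _ (by fin_cases i <;> simp))
    rw [refTriangle]
    convert hmem using 1
    ext i; fin_cases i <;> simp [Fin.sum_univ_three]

theorem isCompact_refTriangle : IsCompact refTriangle :=
  (toFinite _).isCompact_convexHull (𝕜 := ℝ)

theorem eval_bubble_nonneg {x : Fin 2 → ℝ} (hx : x ∈ refTriangle) : 0 ≤ eval x bubble := by
  rw [refTriangle_eq] at hx
  obtain ⟨hx0, hx1, hx⟩ := hx
  have : 0 ≤ 1 - x 0 - x 1 := by linarith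
  simp only [bubble, map_mul, map_sub, map_one, eval_X]
  positivity

theorem pi_Ioo_subset_refTriangle : pi univ (fun _ => Ioo (0 : ℝ) (1 / 2)) ⊆ refTriangle := by
  intro x hx
  have h0 := hx 0 trivial
  have h1 := hx 1 trivial
  rw [refTriangle_eq]
  exact ⟨h0.1.le, h1.1.le, by linarith [h0.2, h1.2]⟩

theorem eval_bubble_pos {x : Fin 2 → ℝ} (hx : x ∈ pi univ (fun _ => Ioo (0 : ℝ) (1 / 2))) :
    0 < eval x bubble := by
  obtain ⟨hx0, hx0'⟩ := hx 0 trivial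
  obtain ⟨hx1, hx1'⟩ := hx 1 trivial
  have : 0 < 1 - x 0 - x 1 := by linarith
  simp only [bubble, map_mul, map_sub, map_one, eval_X]
  positivity

theorem totalDegree_one_sub_X_sub_X : (1 - X 0 - X 1 : MvPolynomial (Fin 2) ℝ).totalDegree = 1 := by
  apply le_antisymm
  · refine (totalDegree_sub _ _).trans (max_le ((totalDegree_sub _ _).trans (max_le ?_ ?_)) ?_) <;>
      simp
  · refine le_totalDegree (s := Finsupp.single 0 1) ?_ |>.trans' (by simp)
    simp [coeff_X, coeff_one, Finsupp.single_eq_single_iff, eq_comm (a := (0 : Fin 2 →₀ ℕ))]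

theorem totalDegree_bubble : bubble.totalDegree = 3 := by
  have hℓ : (1 - X 0 - X 1 : MvPolynomial (Fin 2) ℝ) ≠ 0 := fun h => by
    simpa [h] using totalDegree_one_sub_X_sub_X
  rw [bubble, totalDegree_mul_of_isDomain (mul_ne_zero (X_ne_zero 0) (X_ne_zero 1)) hℓ,
    totalDegree_mul_of_isDomain (X_ne_zero 0) (X_ne_zero 1), totalDegree_X, totalDegree_X,
    totalDegree_one_sub_X_sub_X]

theorem bubble_ne_zero : bubble ≠ 0 := fun h => by
  simpa [h] using totalDegree_bubble

theorem setIntegral_eval_mul_eq_zero_of_moments {f : (Fin 2 → ℝ) → ℝ} (hf : Continuous f)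
    {m : ℕ} (h : ∀ a b, a + b ≤ m → ∫ x in refTriangle, x 0 ^ a * x 1 ^ b * f x = 0)
    {q : MvPolynomial (Fin 2) ℝ} (hq : q.totalDegree ≤ m) :
    ∫ x in refTriangle, eval x q * f x = 0 := by
  simp_rw [eval_eq', Fin.prod_univ_two, Finset.sum_mul, mul_assoc]
  rw [integral_finsetSum]
  · refine Finset.sum_eq_zero fun d hd => ?_
    have hdeg := (le_totalDegree hd).trans hq
    rw [Finsupp.sum_fintype _ _ (fun _ => rfl), Fin.sum_univ_two] at hdeg
    have hmom := h (d 0) (d 1) hdeg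
    simp only [mul_assoc] at hmom
    rw [integral_const_mul, hmom, mul_zero]
  · exact fun d _ => (by fun_prop : Continuous _).continuousOn.integrableOn_compact
      isCompact_refTriangle

theorem eq_zero_of_setIntegral_eval_mul_eval_bubble_mul {w : MvPolynomial (Fin 2) ℝ}
    (h : ∫ x in refTriangle, eval x w * eval x (bubble * w) = 0) : w = 0 := by
  have hcont : Continuous fun x => eval x w * eval x (bubble * w) :=
    (continuous_eval w).mul (continuous_eval _)
  have hnonneg (x : Fin 2 → ℝ) (hx : x ∈ refTriangle) : 0 ≤ eval x w * eval x (bubble * w) := by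
    rw [map_mul, mul_left_comm]
    exact mul_nonneg (eval_bubble_nonneg hx) (mul_self_nonneg _)
  have hzero := eqOn_zero_of_setIntegral_eq_zero isCompact_refTriangle.isClosed.measurableSet
    (hcont.continuousOn.integrableOn_compact isCompact_refTriangle) hnonneg h
    (isOpen_set_pi finite_univ fun _ _ => isOpen_Ioo) pi_Ioo_subset_refTriangle hcont.continuousOn
  refine funext_set (fun _ => Ioo (0 : ℝ) (1 / 2)) (fun _ => Ioo_infinite (by norm_num))
    fun x hx => ?_
  have hx0 : eval x bubble * (eval x w * eval x w) = 0 := by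
    simpa [mul_left_comm] using hzero hx
  simpa using (mul_eq_zero.mp hx0).resolve_left (eval_bubble_pos hx).ne'

def edge : Fin 3 → ℝ → Fin 2 → ℝ := ![edgeParam₁, edgeParam₂, edgeParam₃]

theorem continuous_edge (j : Fin 3) : Continuous (edge j) := by
  fin_cases j
  exacts [(by fun_prop : Continuous fun t : ℝ => ![t, 0]),
    (by fun_prop : Continuous fun t : ℝ => ![0, t]),
    (by fun_prop : Continuous fun t : ℝ => ![t, 1 - t])]

noncomputable def edgeParamPoly : Fin 3 → Fin 2 → ℝ[X] :=
  ![![Polynomial.X, 0], ![0, Polynomial.X], ![Polynomial.X, 1 - Polynomial.X]]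

noncomputable def restrictToEdge (j : Fin 3) (p : MvPolynomial (Fin 2) ℝ) : ℝ[X] :=
  aeval (edgeParamPoly j) p

theorem eval_restrictToEdge (j : Fin 3) (p : MvPolynomial (Fin 2) ℝ) (t : ℝ) :
    (restrictToEdge j p).eval t = eval (edge j t) p := by
  rw [restrictToEdge, polynomial_eval_aeval]
  refine congrArg (fun x => eval x p) (funext fun i => ?_)
  fin_cases j <;> fin_cases i <;> simp [edge, edgeParamPoly, edgeParam₁, edgeParam₂, edgeParam₃]

theorem natDegree_restrictToEdge_le (j : Fin 3) (p : MvPolynomial (Fin 2) ℝ) :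
    (restrictToEdge j p).natDegree ≤ p.totalDegree :=
  natDegree_aeval_le_totalDegree (fun i => by
    fin_cases j <;> fin_cases i <;> simp [edgeParamPoly]) p

theorem restrictToEdge_eq_zero {k : ℕ} (hodd : Odd k) {p : MvPolynomial (Fin 2) ℝ}
    (hdeg : p.totalDegree ≤ k) (hmom : ∀ j, HasVanishingMoments k (restrictToEdge j p))
    (j : Fin 3) :
    restrictToEdge j p = 0 := by
  have hdeg' (j : Fin 3) : (restrictToEdge j p).natDegree ≤ k :=
    (natDegree_restrictToEdge_le j p).trans hdeg
  have hanti (j : Fin 3) : eval (edge j 1) p = -eval (edge j 0) p := by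
    simpa [eval_restrictToEdge] using
      congrArg (Polynomial.eval 0) ((hmom j).comp_one_sub_X_eq_neg hodd (hdeg' j))
  have h₁ : eval ![1, 0] p = -eval ![0, 0] p := by simpa [edge, edgeParam₁] using hanti 0
  have h₂ : eval ![0, 1] p = -eval ![0, 0] p := by simpa [edge, edgeParam₂] using hanti 1
  have h₃ : eval ![1, 0] p = -eval ![0, 1] p := by simpa [edge, edgeParam₃] using hanti 2
  have hA : eval ![0, 0] p = 0 := by linarith
  have hB : eval ![1, 0] p = 0 := by linarith
  have hC : eval ![0, 1] p = 0 := by linarith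
  refine (hmom j).eq_zero_of_eval_zero_of_eval_one (hdeg' j) ?_ ?_ <;>
    fin_cases j <;> simp [eval_restrictToEdge, edge, edgeParam₁, edgeParam₂, edgeParam₃, hA, hB, hC]

def pairsWithSumLt (m : ℕ) : Finset (ℕ × ℕ) :=
  (Finset.range m ×ˢ Finset.range m).filter fun p => p.1 + p.2 < m

@[simp]
theorem mem_pairsWithSumLt {m : ℕ} {p : ℕ × ℕ} : p ∈ pairsWithSumLt m ↔ p.1 + p.2 < m := by
  simp only [pairsWithSumLt, Finset.mem_filter, Finset.mem_product, Finset.mem_range]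
  omega

theorem card_pairsWithSumLt_mul_two (m : ℕ) : (pairsWithSumLt m).card * 2 = m * (m + 1) := by
  induction m with
  | zero => rfl
  | succ m ih =>
    have hsplit :
        pairsWithSumLt (m + 1) = pairsWithSumLt m ∪ Finset.HasAntidiagonal.antidiagonal m := by
      ext p
      simp only [Finset.mem_union, mem_pairsWithSumLt, Finset.HasAntidiagonal.mem_antidiagonal]
      omega
    have hdisj : Disjoint (pairsWithSumLt m) (Finset.HasAntidiagonal.antidiagonal m) :=
      Finset.disjoint_left.mpr fun p hp hp' => by
        simp only [mem_pairsWithSumLt, Finset.HasAntidiagonal.mem_antidiagonal] at hp hp'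
        omega
    rw [hsplit, Finset.card_union_of_disjoint hdisj, Finset.Nat.card_antidiagonal, add_mul, ih]
    ring

theorem finrank_restrictTotalDegree_fin_two (R : Type*) [CommRing R] [Nontrivial R] (k : ℕ) :
    Module.finrank R (restrictTotalDegree (Fin 2) R k) = (pairsWithSumLt (k + 1)).card := by
  rw [restrictTotalDegree, Module.finrank_eq_nat_card_basis (basisRestrictSupport R _),
    ← Nat.card_eq_finsetCard]
  refine Nat.card_congr ((Finsupp.equivFunOnFinite.trans (piFinTwoEquiv fun _ => ℕ)).subtypeEquiv
    fun d => ?_)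
  simp [Finsupp.sum_fintype, Fin.sum_univ_two]

/-- `a + b < k - 2` says `a + b + 3 ≤ k`, also when `k - 2` truncates to `0`. -/
abbrev CRIndex (k : ℕ) : Type := Fin 3 × Fin k ⊕ pairsWithSumLt (k - 2)

noncomputable def crMoments (k : ℕ) (f : (Fin 2 → ℝ) → ℝ) : CRIndex k → ℝ :=
  Sum.elim (fun ji => ∫ t in (0 : ℝ)..1, t ^ (ji.2 : ℕ) * f (edge ji.1 t))
    (fun ab => ∫ x in refTriangle, x 0 ^ ab.1.1 * x 1 ^ ab.1.2 * f x)

theorem range_edge : range edge = {edgeParam₁, edgeParam₂, edgeParam₃} := by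
  simp only [edge, Matrix.range_cons, Matrix.range_empty, union_empty, singleton_union]

theorem matchesCRMoments_iff {k : ℕ} {u v : (Fin 2 → ℝ) → ℝ} :
    MatchesCRMoments k u v ↔ crMoments k v = crMoments k u := by
  rw [MatchesCRMoments, ← range_edge, funext_iff, Sum.forall]
  simp only [forall_mem_range, Prod.forall, Subtype.forall, mem_pairsWithSumLt, crMoments,
    Sum.elim_inl, Sum.elim_inr, Fin.forall_iff]
  exact and_congr ⟨fun h j hj i hi => h i hi j hj, fun h i hi j hj => h j hj i hi⟩
    (forall₂_congr fun a b => imp_congr_left (by omega))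

theorem crMoments_add {k : ℕ} {f g : (Fin 2 → ℝ) → ℝ} (hf : Continuous f) (hg : Continuous g) :
    crMoments k (fun x => f x + g x) = crMoments k f + crMoments k g := by
  funext idx
  rcases idx with ⟨j, i⟩ | ab
  · simp only [crMoments, Sum.elim_inl, Pi.add_apply, mul_add]
    have hcont (h : (Fin 2 → ℝ) → ℝ) (hh : Continuous h) :
        Continuous fun t => t ^ (i : ℕ) * h (edge j t) :=
      (continuous_pow _).mul (hh.comp (continuous_edge j))
    exact intervalIntegral.integral_add ((hcont f hf).intervalIntegrable _ _)
      ((hcont g hg).intervalIntegrable _ _)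
  · simp only [crMoments, Sum.elim_inr, Pi.add_apply, mul_add]
    have hint (h : (Fin 2 → ℝ) → ℝ) (hh : Continuous h) :
        IntegrableOn (fun x : Fin 2 → ℝ => x 0 ^ ab.1.1 * x 1 ^ ab.1.2 * h x) refTriangle :=
      (by fun_prop : Continuous _).continuousOn.integrableOn_compact isCompact_refTriangle
    exact integral_add (hint f hf) (hint g hg)

theorem crMoments_const_mul {k : ℕ} (c : ℝ) (f : (Fin 2 → ℝ) → ℝ) :
    crMoments k (fun x => c * f x) = c • crMoments k f := by
  funext idx
  rcases idx with ⟨j, i⟩ | ab <;>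
    simp only [crMoments, Sum.elim_inl, Sum.elim_inr, Pi.smul_apply, smul_eq_mul, mul_left_comm _ c,
      intervalIntegral.integral_const_mul, integral_const_mul]

noncomputable def crMomentMap (k : ℕ) : MvPolynomial (Fin 2) ℝ →ₗ[ℝ] CRIndex k → ℝ where
  toFun p := crMoments k fun x => eval x p
  map_add' p q := by
    simp only [map_add]
    exact crMoments_add (continuous_eval p) (continuous_eval q)
  map_smul' c p := by
    simp only [smul_eval, RingHom.id_apply]
    exact crMoments_const_mul c _

theorem eq_zero_of_crMoments_eq_zero {k : ℕ} (hodd : Odd k) {p : MvPolynomial (Fin 2) ℝ}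
    (hdeg : p.totalDegree ≤ k) (h : crMoments k (fun x => eval x p) = 0) : p = 0 := by
  have hedge := restrictToEdge_eq_zero hodd hdeg fun j i hi => by
    simpa [eval_restrictToEdge, crMoments] using congrFun h (.inl (j, ⟨i, hi⟩))
  have hline (j : Fin 3) (t : ℝ) : eval (edge j t) p = 0 := by
    rw [← eval_restrictToEdge, hedge j, Polynomial.eval_zero]
  obtain ⟨w, rfl⟩ := exists_eq_bubble_mul (hline 0) (hline 1) (hline 2)
  rcases eq_or_ne w 0 with rfl | hw
  · exact mul_zero bubble
  have hwdeg : w.totalDegree + 3 ≤ k := by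
    rw [totalDegree_mul_of_isDomain bubble_ne_zero hw, totalDegree_bubble] at hdeg
    omega
  have hint := setIntegral_eval_mul_eq_zero_of_moments (continuous_eval (bubble * w))
    (m := w.totalDegree) (fun a b hab => by
      simpa [crMoments] using congrFun h (.inr ⟨(a, b), by simp only [mem_pairsWithSumLt]; omega⟩))
    (q := w) le_rfl
  rw [eq_zero_of_setIntegral_eval_mul_eval_bubble_mul hint, mul_zero]

theorem card_crIndex {k : ℕ} (hk : 1 ≤ k) :
    Fintype.card (CRIndex k) = (pairsWithSumLt (k + 1)).card := by
  rw [Fintype.card_sum, Fintype.card_prod, Fintype.card_fin, Fintype.card_fin, Fintype.card_coe]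
  rcases Nat.lt_or_ge k 2 with hk2 | hk2
  · obtain rfl : k = 1 := by omega
    decide
  · obtain ⟨j, rfl⟩ := Nat.exists_eq_add_of_le' hk2
    have h₁ := card_pairsWithSumLt_mul_two (j + 2 + 1)
    have h₂ := card_pairsWithSumLt_mul_two j
    rw [Nat.add_sub_cancel]
    nlinarith

theorem bijective_crMomentMap_domRestrict {k : ℕ} (hodd : Odd k) :
    Function.Bijective ((crMomentMap k).domRestrict (restrictTotalDegree (Fin 2) ℝ k)) := by
  set Φ := (crMomentMap k).domRestrict (restrictTotalDegree (Fin 2) ℝ k)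
  have hinj : Function.Injective Φ := by
    rw [← LinearMap.ker_eq_bot, LinearMap.ker_eq_bot']
    rintro ⟨p, hp⟩ h
    exact Subtype.ext (eq_zero_of_crMoments_eq_zero hodd ((mem_restrictTotalDegree _ _ _).mp hp) h)
  refine ⟨hinj, (LinearMap.injective_iff_surjective_of_finrank_eq_finrank ?_).mp hinj⟩
  rw [finrank_restrictTotalDegree_fin_two, Module.finrank_fintype_fun_eq_card,
    card_crIndex hodd.pos]

theorem stmt_7_general (k : ℕ) (hodd : Odd k)
    (u : (Fin 2 → ℝ) → ℝ) :
    ∃! v : MvPolynomial (Fin 2) ℝ,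
      v.totalDegree ≤ k ∧ MatchesCRMoments k u (fun x => MvPolynomial.eval x v) := by
  obtain ⟨⟨v, hv⟩, hvu, huniq⟩ :=
    (bijective_crMomentMap_domRestrict hodd).existsUnique (crMoments k u)
  refine ⟨v, ⟨(mem_restrictTotalDegree _ _ _).mp hv, matchesCRMoments_iff.mpr hvu⟩, ?_⟩
  rintro w ⟨hw, hwu⟩
  exact congrArg Subtype.val
    (huniq ⟨w, (mem_restrictTotalDegree _ _ _).mpr hw⟩ (matchesCRMoments_iff.mp hwu))

/-- Well-definedness of the local Crouzeix–Raviart interpolation operator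
`I_{K,k}^{loc}` on the reference element: for odd `k ≥ 1` and every continuous `u`
there is a unique polynomial of total degree at most `k` matching the
Crouzeix–Raviart moments of `u` of order `k`. -/
theorem stmt_7 (k : ℕ) (hk : 1 ≤ k) (hodd : Odd k)
    (u : (Fin 2 → ℝ) → ℝ) (hu : Continuous u) :
    ∃! v : MvPolynomial (Fin 2) ℝ,
      v.totalDegree ≤ k ∧ MatchesCRMoments k u (fun x => MvPolynomial.eval x v) :=
  stmt_7_general k hodd u
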